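/- Let S = {x₁, …, x_k} be a multiset of natural numbers. Consider the sum-automaton A with states q₀, …, q_k where from q_{i−1} to q_i there are two transitions with weights x_i and −x_i respectively (over a one-letter input alphabet), q₀ initial, q_k final, plus a self-loop of weight 0 on q_k. Then there exists a subset I ⊆ {1,…,k} with Σ_{i∈I} x_i = Σ_{i∉I} x_i if and only if there exist two accepting runs of A assigning the same value to their (possibly different) inputs, equivalently iff some accepting run of A has value 0. -/

import Mathlib

/-- A sum-automaton: an automaton whose transitions carry integer weights. -/
structure SumAut (α Q : Type*) where
  start : Set Q
  accept : Set Q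
  step : Q → α → ℤ → Q → Prop

/-- `IsRunFrom A p ts q`: `ts` is a sequence of weighted transitions of `A`
forming a run from `p` to `q`. -/
def IsRunFrom {α Q : Type*} (A : SumAut α Q) (p : Q)
    (ts : List (Q × α × ℤ × Q)) (q : Q) : Prop :=
  (∀ t ∈ ts, A.step t.1 t.2.1 t.2.2.1 t.2.2.2) ∧
  List.Chain' (fun s t => s.2.2.2 = t.1) ts ∧
  (∀ t, ts.head? = some t → t.1 = p) ∧
  (∀ t, ts.getLast? = some t → t.2.2.2 = q) ∧
  (ts = [] → p = q)

/-- The value of a run: the sum of the weights of its transitions. -/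
def runValue {α Q : Type*} (ts : List (Q × α × ℤ × Q)) : ℤ :=
  (ts.map (fun t => t.2.2.1)).sum

/-- The sum-automaton of the Set Partition reduction: states `q₀, …, q_k`, two
transitions of weights `xᵢ` and `-xᵢ` from `q_{i-1}` to `q_i`, over a one-letter
alphabet, `q₀` initial, `q_k` final, and a self-loop of weight `0` on `q_k`. -/
def partitionAut (k : ℕ) (x : Fin k → ℕ) : SumAut Unit (Fin (k + 1)) where
  start := {0}
  accept := {Fin.last k}
  step q _ z q' :=
    (∃ i : Fin k, q = i.castSucc ∧ q' = i.succ ∧ (z = (x i : ℤ) ∨ z = -(x i : ℤ))) ∨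
    (q = Fin.last k ∧ q' = Fin.last k ∧ z = 0)

/-!
An accepting run of `partitionAut k x` has to walk `q₀ → q₁ → ⋯ → q_k`, choosing the weight
`xᵢ` or `-xᵢ` on each step, and can afterwards only take the weight-`0` loop on `q_k`. So the
values of accepting runs are exactly the signed sums `∑ ±xᵢ`, and a signed sum vanishes iff the
indices carrying `+` form one half of a partition. A run starting at `q_k` can only loop, so it
has value `0`, and the two-run condition collapses to the existence of a run of value `0`.
-/

section SumAut

variable {α Q : Type*} (A : SumAut α Q)

@[simp]
theorem isRunFrom_nil_iff {p q : Q} : IsRunFrom A p [] q ↔ p = q :=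
  ⟨fun h => h.2.2.2.2 rfl, fun h => ⟨by simp, .nil, by simp, by simp, fun _ => h⟩⟩

@[simp]
theorem isRunFrom_cons_iff {p q : Q} {t : Q × α × ℤ × Q} {ts : List (Q × α × ℤ × Q)} :
    IsRunFrom A p (t :: ts) q ↔
      t.1 = p ∧ A.step t.1 t.2.1 t.2.2.1 t.2.2.2 ∧ IsRunFrom A t.2.2.2 ts q := by
  cases ts with
  | nil => simp [IsRunFrom]; tauto
  | cons u us =>
    -- `IsRunFrom` is phrased with `Chain'`, which unfolds to `IsChain`; `tauto` sees through it.
    have := List.isChain_cons_cons (R := fun s t : Q × α × ℤ × Q => s.2.2.2 = t.1)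
      (a := t) (b := u) (l := us)
    simp [IsRunFrom, List.getLast?_cons]
    tauto

@[simp]
theorem runValue_nil : runValue ([] : List (Q × α × ℤ × Q)) = 0 := rfl

@[simp]
theorem runValue_cons (t : Q × α × ℤ × Q) (ts : List (Q × α × ℤ × Q)) :
    runValue (t :: ts) = t.2.2.1 + runValue ts := by
  simp [runValue]

end SumAut

section Signing

variable {ι M : Type*}

def IsSigning [Neg M] (x ε : ι → M) : Prop :=
  ∀ i, ε i = x i ∨ ε i = -x i

theorem IsSigning.update [Neg M] [DecidableEq ι] {x ε : ι → M} (hε : IsSigning x ε) {i : ι}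
    {w : M} (hw : w = x i ∨ w = -x i) : IsSigning x (Function.update ε i w) := by
  intro j
  rcases eq_or_ne j i with rfl | hj
  · simpa using hw
  · simpa [hj] using hε j

theorem sum_ite_mem_neg [Fintype ι] [DecidableEq ι] [AddCommGroup M] (I : Finset ι)
    (x : ι → M) : ∑ i, (if i ∈ I then x i else -x i) = ∑ i ∈ I, x i - ∑ i ∈ Iᶜ, x i := by
  simp [Finset.sum_ite, Finset.filter_notMem_eq_sdiff, Finset.compl_eq_univ_sdiff, sub_eq_add_neg]

theorem exists_sum_eq_sum_compl_iff_exists_isSigning [Fintype ι] [DecidableEq ι]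
    [AddCommGroup M] (x : ι → M) :
    (∃ I : Finset ι, ∑ i ∈ I, x i = ∑ i ∈ Iᶜ, x i) ↔ ∃ ε, IsSigning x ε ∧ ∑ i, ε i = 0 := by
  constructor
  · rintro ⟨I, hI⟩
    refine ⟨fun i => if i ∈ I then x i else -x i, fun i => ?_, ?_⟩
    · by_cases hi : i ∈ I <;> simp [hi]
    · rw [sum_ite_mem_neg, hI, sub_self]
  · rintro ⟨ε, hε, hsum⟩
    classical
    set I := Finset.univ.filter fun i => ε i = x i
    have hεI : ε = fun i => if i ∈ I then x i else -x i := funext fun i => by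
      by_cases h : ε i = x i
      · simp [I, h]
      · simp [I, (hε i).resolve_left h]
    refine ⟨I, ?_⟩
    rw [← sub_eq_zero, ← sum_ite_mem_neg, ← hεI, hsum]

end Signing

theorem Fin.sum_filter_castSucc_le_castSucc {M : Type*} [AddCommMonoid M] {k : ℕ} (ε : Fin k → M)
    (j : Fin k) :
    ∑ i with j.castSucc ≤ i.castSucc, ε i = ε j + ∑ i with j.succ ≤ i.castSucc, ε i := by
  simp only [Fin.castSucc_le_castSucc_iff, Fin.succ_le_castSucc_iff, Finset.filter_le_eq_Ici,
    Finset.filter_lt_eq_Ioi, ← Finset.Ioi_insert]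
  exact Finset.sum_insert Finset.notMem_Ioi_self

namespace partitionAut

variable {k : ℕ} (x : Fin k → ℕ)

theorem mem_start_iff {q : Fin (k + 1)} : q ∈ (partitionAut k x).start ↔ q = 0 := Iff.rfl

theorem mem_accept_iff {q : Fin (k + 1)} : q ∈ (partitionAut k x).accept ↔ q = Fin.last k :=
  Iff.rfl

theorem runValue_eq_zero_of_isRunFrom_last {ts : List (Fin (k + 1) × Unit × ℤ × Fin (k + 1))}
    {q : Fin (k + 1)} (h : IsRunFrom (partitionAut k x) (Fin.last k) ts q) : runValue ts = 0 := by
  induction ts with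
  | nil => rfl
  | cons t ts ih =>
    obtain ⟨p, a, w, p'⟩ := t
    simp only [isRunFrom_cons_iff] at h
    obtain ⟨rfl, ⟨i, hi, -⟩ | ⟨-, rfl, rfl⟩, hrest⟩ := h
    · exact absurd hi (Fin.castSucc_lt_last i).ne'
    · simpa using ih hrest

theorem exists_isRunFrom_runValue_eq {ε : Fin k → ℤ} (hε : IsSigning (fun i => (x i : ℤ)) ε)
    (q : Fin (k + 1)) :
    ∃ ts, IsRunFrom (partitionAut k x) q ts (Fin.last k) ∧
      runValue ts = ∑ i with q ≤ i.castSucc, ε i := by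
  induction q using Fin.reverseInduction with
  | last => exact ⟨[], by simp⟩
  | cast j ih =>
    obtain ⟨ts, hrun, hval⟩ := ih
    refine ⟨(j.castSucc, (), ε j, j.succ) :: ts, ?_, ?_⟩
    · exact (isRunFrom_cons_iff _).2 ⟨rfl, .inl ⟨j, rfl, rfl, hε j⟩, hrun⟩
    · rw [runValue_cons, hval, Fin.sum_filter_castSucc_le_castSucc]

theorem exists_isSigning_of_isRunFrom {ts : List (Fin (k + 1) × Unit × ℤ × Fin (k + 1))}
    {q : Fin (k + 1)} (h : IsRunFrom (partitionAut k x) q ts (Fin.last k)) :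
    ∃ ε, IsSigning (fun i => (x i : ℤ)) ε ∧ runValue ts = ∑ i with q ≤ i.castSucc, ε i := by
  induction ts generalizing q with
  | nil =>
    obtain rfl : q = Fin.last k := by simpa using h
    exact ⟨fun i => x i, fun i => Or.inl rfl, by simp⟩
  | cons t ts ih =>
    obtain ⟨p, a, w, p'⟩ := t
    simp only [isRunFrom_cons_iff] at h
    obtain ⟨rfl, ⟨i, rfl, rfl, hw⟩ | ⟨rfl, rfl, rfl⟩, hrest⟩ := h
    · obtain ⟨ε, hε, hval⟩ := ih hrest
      refine ⟨Function.update ε i w, hε.update hw, ?_⟩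
      rw [Fin.sum_filter_castSucc_le_castSucc, Function.update_self, runValue_cons, hval]
      congr 1
      refine Finset.sum_congr rfl fun j hj => (Function.update_of_ne ?_ _ _).symm
      exact (Fin.succ_le_castSucc_iff.1 (Finset.mem_filter.1 hj).2).ne'
    · obtain ⟨ε, hε, hval⟩ := ih hrest
      exact ⟨ε, hε, by simpa using hval⟩

theorem exists_partition_iff_exists_isRunFrom_runValue_eq_zero :
    (∃ I : Finset (Fin k), ∑ i ∈ I, (x i : ℤ) = ∑ i ∈ Iᶜ, (x i : ℤ)) ↔
      ∃ ts, IsRunFrom (partitionAut k x) 0 ts (Fin.last k) ∧ runValue ts = 0 := by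
  rw [exists_sum_eq_sum_compl_iff_exists_isSigning]
  constructor
  · rintro ⟨ε, hε, hsum⟩
    obtain ⟨ts, hrun, hval⟩ := exists_isRunFrom_runValue_eq x hε 0
    exact ⟨ts, hrun, by simpa [hsum] using hval⟩
  · rintro ⟨ts, hrun, hval⟩
    obtain ⟨ε, hε, hsum⟩ := exists_isSigning_of_isRunFrom x hrun
    exact ⟨ε, hε, by simpa [hval] using hsum.symm⟩

end partitionAut

/-- There is a subset `I` with `Σ_{i∈I} xᵢ = Σ_{i∉I} xᵢ` iff there are two
accepting-pattern runs of the automaton (one from the initial state to a final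
state, one from a final state to a final state) with the same value, and
equivalently iff some accepting run has value `0`. -/
theorem setPartition_reduction (k : ℕ) (x : Fin k → ℕ) :
    ((∃ I : Finset (Fin k), ∑ i ∈ I, (x i : ℤ) = ∑ i ∈ Iᶜ, (x i : ℤ)) ↔
      (∃ (π₁ π₂ : List (Fin (k + 1) × Unit × ℤ × Fin (k + 1)))
        (q₀ e₁ s₂ e₂ : Fin (k + 1)),
        q₀ ∈ (partitionAut k x).start ∧ e₁ ∈ (partitionAut k x).accept ∧
        s₂ ∈ (partitionAut k x).accept ∧ e₂ ∈ (partitionAut k x).accept ∧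
        IsRunFrom (partitionAut k x) q₀ π₁ e₁ ∧
        IsRunFrom (partitionAut k x) s₂ π₂ e₂ ∧
        runValue π₁ = runValue π₂)) ∧
    ((∃ I : Finset (Fin k), ∑ i ∈ I, (x i : ℤ) = ∑ i ∈ Iᶜ, (x i : ℤ)) ↔
      (∃ (π : List (Fin (k + 1) × Unit × ℤ × Fin (k + 1))) (q₀ e : Fin (k + 1)),
        q₀ ∈ (partitionAut k x).start ∧ e ∈ (partitionAut k x).accept ∧
        IsRunFrom (partitionAut k x) q₀ π e ∧ runValue π = 0)) := by
  rw [partitionAut.exists_partition_iff_exists_isRunFrom_runValue_eq_zero]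
  simp only [partitionAut.mem_start_iff, partitionAut.mem_accept_iff]
  refine ⟨⟨?_, ?_⟩, ⟨?_, ?_⟩⟩
  · rintro ⟨π, hrun, hval⟩
    exact ⟨π, [], 0, _, _, _, rfl, rfl, rfl, rfl, hrun, (isRunFrom_nil_iff _).2 rfl, hval⟩
  · rintro ⟨π₁, π₂, _, _, _, _, rfl, rfl, rfl, rfl, hrun₁, hrun₂, hval⟩
    exact ⟨π₁, hrun₁, hval.trans (partitionAut.runValue_eq_zero_of_isRunFrom_last x hrun₂)⟩
  · rintro ⟨π, hrun, hval⟩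
    exact ⟨π, _, _, rfl, rfl, hrun, hval⟩
  · rintro ⟨π, _, _, rfl, rfl, hrun, hval⟩
    exact ⟨π, hrun, hval⟩
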